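/- Let K be an algebraically closed field of characteristic zero, d ≥ 1, and A = K⟨v1,…,vd⟩ the free associative K-algebra. If ⟪-,-⟫ is a mixed double Poisson algebra structure on A of weight λ = (λ1,…,λd) ∈ K^d, then for all 1≤i,j≤d and every c ∈ A one has −⟪v_j,⟪v_i,c⟫⟫_L + ⟪v_i,⟪v_j,c⟫⟫_R − ⟪⟪v_i,v_j⟫°,c⟫_L = ((λ_j+λ_i)/2)·(v_j ⊗₁ ⟪v_i,c⟫) + ((λ_j−λ_i)/2)·(1 ⊗₁ (⟪v_i,c⟫ ∗ v_j)). -/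

import Mathlib

open TensorProduct

noncomputable section

variable (K : Type*) [Field K]
variable (A : Type*) [Ring A] [Algebra K A]

/-- Leibniz rules for a double-bracket-type operation. -/
def LeibnizRules (D : A ⊗[K] A →ₗ[K] A ⊗[K] A) : Prop :=
  (∀ a b c : A,
      D (a ⊗ₜ[K] (b * c)) =
        (b ⊗ₜ[K] (1 : A)) * D (a ⊗ₜ[K] c) + D (a ⊗ₜ[K] b) * ((1 : A) ⊗ₜ[K] c))
  ∧ (∀ a b c : A,
      D ((a * b) ⊗ₜ[K] c) =
        ((1 : A) ⊗ₜ[K] a) * D (b ⊗ₜ[K] c) + D (a ⊗ₜ[K] c) * (b ⊗ₜ[K] (1 : A)))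

/-- The associated bracket `{a,b} = m(⟪a,b⟫)`. -/
def br (D : A ⊗[K] A →ₗ[K] A ⊗[K] A) (a b : A) : A :=
  LinearMap.mul' K A (D (a ⊗ₜ[K] b))

/-- The K-span of commutators `[A,A]`. -/
def commutatorSpan : Submodule K A :=
  Submodule.span K {x : A | ∃ a b : A, x = a * b - b * a}

/-- The flip on `A ⊗ A`. -/
def flipT : A ⊗[K] A →ₗ[K] A ⊗[K] A := (TensorProduct.comm K A A).toLinearMap

/-- Swap of the last two tensor factors of `(A ⊗ A) ⊗ A`. -/
def swap23 : ((A ⊗[K] A) ⊗[K] A) →ₗ[K] ((A ⊗[K] A) ⊗[K] A) :=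
  (TensorProduct.assoc K A A A).symm.toLinearMap ∘ₗ
    (LinearMap.lTensor A (TensorProduct.comm K A A).toLinearMap) ∘ₗ
    (TensorProduct.assoc K A A A).toLinearMap

/-- `⟪a, -⟫_L` on double tensors: `b ⊗ c ↦ ⟪a,b⟫ ⊗ c`. -/
def dL (D : A ⊗[K] A →ₗ[K] A ⊗[K] A) (a : A) :
    A ⊗[K] A →ₗ[K] (A ⊗[K] A) ⊗[K] A :=
  LinearMap.rTensor A (D ∘ₗ TensorProduct.mk K A A a)

/-- `⟪a, -⟫_R` on double tensors: `b ⊗ c ↦ b ⊗ ⟪a,c⟫`. -/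
def dR (D : A ⊗[K] A →ₗ[K] A ⊗[K] A) (a : A) :
    A ⊗[K] A →ₗ[K] (A ⊗[K] A) ⊗[K] A :=
  (TensorProduct.assoc K A A A).symm.toLinearMap ∘ₗ
    LinearMap.lTensor A (D ∘ₗ TensorProduct.mk K A A a)

/-- `⟪-, c⟫_L` on double tensors: `b ⊗ b' ↦ ⟪b,c⟫' ⊗ b' ⊗ ⟪b,c⟫''`. -/
def dLfst (D : A ⊗[K] A →ₗ[K] A ⊗[K] A) (c : A) :
    A ⊗[K] A →ₗ[K] (A ⊗[K] A) ⊗[K] A :=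
  swap23 K A ∘ₗ LinearMap.rTensor A (D ∘ₗ (TensorProduct.mk K A A).flip c)

/-- The double Jacobiator. -/
def DJac (D : A ⊗[K] A →ₗ[K] A ⊗[K] A) (a b c : A) : (A ⊗[K] A) ⊗[K] A :=
  dL K A D a (D (b ⊗ₜ[K] c)) - dR K A D b (D (a ⊗ₜ[K] c)) - dLfst K A D c (D (a ⊗ₜ[K] b))

/-- `c ⊗₁ (-)` : `w' ⊗ w'' ↦ w' ⊗ c ⊗ w''`. -/
def otimes1 (c : A) : A ⊗[K] A →ₗ[K] (A ⊗[K] A) ⊗[K] A :=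
  LinearMap.rTensor A ((TensorProduct.mk K A A).flip c)

variable {ι : Type*}

/-- Mixed double algebra structure of weight `lam` with respect to the generators `v`. -/
def IsMixedDouble (v : ι → A) (lam : ι → K) (D : A ⊗[K] A →ₗ[K] A ⊗[K] A) : Prop :=
  LeibnizRules K A D ∧
  ∀ i j : ι,
    D (v i ⊗ₜ[K] v j) + flipT K A (D (v j ⊗ₜ[K] v i)) =
      ((lam i + lam j) / 2) • (v i ⊗ₜ[K] v j - v j ⊗ₜ[K] v i) +
      ((lam i - lam j) / 2) • ((1 : A) ⊗ₜ[K] (v i * v j) - (v j * v i) ⊗ₜ[K] (1 : A))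

/-- Mixed double Poisson algebra structure of weight `lam` w.r.t. the generators `v`. -/
def IsMixedDoublePoisson (v : ι → A) (lam : ι → K) (D : A ⊗[K] A →ₗ[K] A ⊗[K] A) : Prop :=
  IsMixedDouble K A v lam D ∧
  ∀ i j k : ι,
    DJac K A D (v i) (v j) (v k) =
      (-((lam i + lam j) / 2)) • otimes1 K A (v j) (D (v i ⊗ₜ[K] v k)) +
      ((lam i - lam j) / 2) •
        otimes1 K A (1 : A) (((1 : A) ⊗ₜ[K] v j) * D (v i ⊗ₜ[K] v k))

/-- Modified double Poisson bracket. -/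
def IsModifiedDoublePoisson (D : A ⊗[K] A →ₗ[K] A ⊗[K] A) : Prop :=
  LeibnizRules K A D ∧
  (∀ a b : A, br K A D a b + br K A D b a ∈ commutatorSpan K A) ∧
  (∀ a b c : A,
    br K A D a (br K A D b c) - br K A D b (br K A D a c) - br K A D (br K A D a b) c = 0)

end

/-! For fixed `i, j`, the difference `E(c)` of the two sides is `K`-linear in `c` and, by the
Leibniz rule in the second argument, satisfies `E(bc) = (b ⊗ 1 ⊗ 1) E(c) + E(b) (1 ⊗ 1 ⊗ c)`: the
cross terms `⟪v_j,b⟫' ⊗ ⟪v_j,b⟫''⟪v_i,c⟫' ⊗ ⟪v_i,c⟫''` produced by `⟪v_j,-⟫_L` and by `⟪v_i,-⟫_R`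
cancel. The zeros of such a twisted derivation form a subalgebra, so it suffices to take
`c = v_k`. There the identity is the Poisson property for `(v_j, v_i, v_k)`, once `⟪v_i,v_j⟫°` is
eliminated with the mixed skew-symmetry and `⟪v_i v_j, v_k⟫` with the Leibniz rule in the first
argument. -/

section TwistedDerivation

variable {R A B C : Type*} [CommSemiring R] [Semiring A] [Algebra R A] [Ring B] [Algebra R B]
  [Ring C] [Algebra R C]

def IsTwistedDerivation (f g : A →ₐ[R] B) (E : A →ₗ[R] B) : Prop :=
  ∀ a b, E (a * b) = f a * E b + E a * g b

variable {f g : A →ₐ[R] B} {E : A →ₗ[R] B}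

theorem IsTwistedDerivation.comp {f' g' : A →ₐ[R] C} (φ : B →ₗ[R] C)
    (hφf : ∀ a u, φ (f a * u) = f' a * φ u) (hφg : ∀ a u, φ (u * g a) = φ u * g' a)
    (hE : IsTwistedDerivation f g E) : IsTwistedDerivation f' g' (φ ∘ₗ E) := by
  intro a b
  simp only [LinearMap.comp_apply, hE a b, map_add, hφf, hφg]

theorem IsTwistedDerivation.mulRight_comp {t : B} (ht : ∀ a, Commute (g a) t)
    (hE : IsTwistedDerivation f g E) : IsTwistedDerivation f g (LinearMap.mulRight R t ∘ₗ E) :=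
  hE.comp _ (fun a u ↦ mul_assoc (f a) u t)
    (fun a u ↦ by simp only [LinearMap.mulRight_apply, mul_assoc, (ht a).eq])

theorem IsTwistedDerivation.map_one (hE : IsTwistedDerivation f g E) : E 1 = 0 := by
  simpa using hE 1 1

theorem IsTwistedDerivation.eq_zero_of_adjoin_eq_top {s : Set A} (hs : Algebra.adjoin R s = ⊤)
    (hE : IsTwistedDerivation f g E) (h0 : ∀ x ∈ s, E x = 0) : E = 0 := by
  ext a
  rw [LinearMap.zero_apply]
  induction (hs ▸ Algebra.mem_top : a ∈ Algebra.adjoin R s) using Algebra.adjoin_induction with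
  | mem x hx => exact h0 x hx
  | algebraMap r => rw [Algebra.algebraMap_eq_smul_one, map_smul, hE.map_one, smul_zero]
  | add x y _ _ hx hy => rw [map_add, hx, hy, add_zero]
  | mul x y _ _ hx hy => rw [hE x y, hx, hy, mul_zero, zero_mul, add_zero]

end TwistedDerivation

section DoubleBracket

variable {K : Type*} [Field K] {A : Type*} [Ring A] [Algebra K A]

local notation "ℓ₂" => (Algebra.TensorProduct.includeLeft : A →ₐ[K] A ⊗[K] A)
local notation "r₂" => (Algebra.TensorProduct.includeRight : A →ₐ[K] A ⊗[K] A)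
local notation "ℓ₃" => AlgHom.comp
  (Algebra.TensorProduct.includeLeft : A ⊗[K] A →ₐ[K] (A ⊗[K] A) ⊗[K] A) ℓ₂
local notation "r₃" => (Algebra.TensorProduct.includeRight : A →ₐ[K] (A ⊗[K] A) ⊗[K] A)

variable {D : A ⊗[K] A →ₗ[K] A ⊗[K] A}

@[simp] theorem dL_tmul (a p q : A) : dL K A D a (p ⊗ₜ q) = D (a ⊗ₜ p) ⊗ₜ q := rfl

@[simp] theorem dR_tmul (a p q : A) :
    dR K A D a (p ⊗ₜ q) = (TensorProduct.assoc K A A A).symm (p ⊗ₜ D (a ⊗ₜ q)) := rfl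

@[simp] theorem otimes1_tmul (c p q : A) : otimes1 K A c (p ⊗ₜ q) = (p ⊗ₜ c) ⊗ₜ q := rfl

@[simp] theorem dLfst_tmul (c p q : A) :
    dLfst K A D c (p ⊗ₜ q) = otimes1 K A q (D (p ⊗ₜ c)) := by
  change swap23 K A (D (p ⊗ₜ c) ⊗ₜ q) = _
  induction D (p ⊗ₜ c) using TensorProduct.induction_on with
  | zero => simp
  | tmul s t => rfl
  | add s t hs ht => rw [TensorProduct.add_tmul, map_add, hs, ht, map_add]

theorem otimes1_mul_left (c b : A) (u : A ⊗[K] A) :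
    otimes1 K A c ((b ⊗ₜ 1) * u) = ((b ⊗ₜ 1) ⊗ₜ 1) * otimes1 K A c u := by
  induction u using TensorProduct.induction_on with
  | zero => simp
  | tmul p q => simp [Algebra.TensorProduct.tmul_mul_tmul]
  | add u v hu hv => rw [mul_add, map_add, hu, hv, map_add, mul_add]

theorem otimes1_mul_right (c b : A) (u : A ⊗[K] A) :
    otimes1 K A c (u * (1 ⊗ₜ b)) = otimes1 K A c u * (1 ⊗ₜ b) := by
  induction u using TensorProduct.induction_on with
  | zero => simp
  | tmul p q => simp [Algebra.TensorProduct.tmul_mul_tmul]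
  | add u v hu hv => rw [add_mul, map_add, hu, hv, map_add, add_mul]

theorem LeibnizRules.isTwistedDerivation_comp_mk (hD : LeibnizRules K A D) (a : A) :
    IsTwistedDerivation ℓ₂ r₂ (D ∘ₗ TensorProduct.mk K A A a) :=
  hD.1 a

theorem IsTwistedDerivation.otimes1_comp {E : A →ₗ[K] A ⊗[K] A}
    (hE : IsTwistedDerivation ℓ₂ r₂ E) (c : A) :
    IsTwistedDerivation ℓ₃ r₃ (otimes1 K A c ∘ₗ E) :=
  hE.comp _ (otimes1_mul_left c) (otimes1_mul_right c)

theorem LeibnizRules.apply_one_tmul (hD : LeibnizRules K A D) (c : A) : D (1 ⊗ₜ c) = 0 := by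
  have h := hD.2 1 1 c
  rw [one_mul, ← Algebra.TensorProduct.one_def, one_mul, mul_one] at h
  exact right_eq_add.mp h

variable (D) in
def dLfstFlip (w : A ⊗[K] A) : A →ₗ[K] (A ⊗[K] A) ⊗[K] A where
  toFun c := dLfst K A D c w
  map_add' b c := by
    induction w using TensorProduct.induction_on with
    | zero => simp
    | tmul p q => simp [TensorProduct.tmul_add]
    | add u v hu hv => simp only [map_add, hu, hv]; abel
  map_smul' r c := by
    induction w using TensorProduct.induction_on with
    | zero => simp
    | tmul p q => simp
    | add u v hu hv => simp only [map_add, hu, hv, RingHom.id_apply, smul_add]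

@[simp] theorem dLfstFlip_apply (w : A ⊗[K] A) (c : A) : dLfstFlip D w c = dLfst K A D c w :=
  rfl

theorem isTwistedDerivation_dLfstFlip (hD : LeibnizRules K A D) (w : A ⊗[K] A) :
    IsTwistedDerivation ℓ₃ r₃ (dLfstFlip D w) := by
  intro b c
  simp only [dLfstFlip_apply]
  induction w using TensorProduct.induction_on with
  | zero => simp
  | tmul p q =>
    simp only [dLfst_tmul, hD.1 p b c, map_add, otimes1_mul_left, otimes1_mul_right]
    rfl
  | add u v hu hv => simp only [map_add, hu, hv, mul_add, add_mul]; abel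

variable (K A) in
/-- `(s' ⊗ s'') ⊗ (u' ⊗ u'') ↦ (s' ⊗ s'' u') ⊗ u''`. -/
def innerMul : (A ⊗[K] A) ⊗[K] (A ⊗[K] A) →ₗ[K] (A ⊗[K] A) ⊗[K] A :=
  LinearMap.rTensor A
      (LinearMap.lTensor A (LinearMap.mul' K A) ∘ₗ
        (TensorProduct.assoc K A A A).toLinearMap) ∘ₗ
    (TensorProduct.assoc K (A ⊗[K] A) A A).symm.toLinearMap

theorem innerMul_tmul_tmul (s : A ⊗[K] A) (p q : A) :
    innerMul K A (s ⊗ₜ (p ⊗ₜ q)) = (s * (1 ⊗ₜ p)) ⊗ₜ q := by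
  induction s using TensorProduct.induction_on with
  | zero => simp
  | tmul s t => simp [innerMul, Algebra.TensorProduct.tmul_mul_tmul]
  | add s t hs ht => rw [TensorProduct.add_tmul, map_add, hs, ht, add_mul, TensorProduct.add_tmul]

theorem innerMul_tmul_tmul_eq_assoc_symm (p q : A) (t : A ⊗[K] A) :
    innerMul K A ((p ⊗ₜ q) ⊗ₜ t) =
      (TensorProduct.assoc K A A A).symm (p ⊗ₜ ((q ⊗ₜ 1) * t)) := by
  induction t using TensorProduct.induction_on with
  | zero => simp
  | tmul s t => simp [innerMul, Algebra.TensorProduct.tmul_mul_tmul]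
  | add s t hs ht =>
    rw [TensorProduct.tmul_add, map_add, hs, ht, mul_add, TensorProduct.tmul_add, map_add]

theorem assoc_symm_mul (x y : A ⊗[K] (A ⊗[K] A)) :
    (TensorProduct.assoc K A A A).symm (x * y) =
      (TensorProduct.assoc K A A A).symm x * (TensorProduct.assoc K A A A).symm y :=
  map_mul (Algebra.TensorProduct.assoc K K K A A A).symm x y

theorem dL_mul_left (hD : LeibnizRules K A D) (a b : A) (u : A ⊗[K] A) :
    dL K A D a ((b ⊗ₜ 1) * u) =
      ((b ⊗ₜ 1) ⊗ₜ 1) * dL K A D a u + innerMul K A (D (a ⊗ₜ b) ⊗ₜ u) := by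
  induction u using TensorProduct.induction_on with
  | zero => simp
  | tmul p q =>
    simp only [Algebra.TensorProduct.tmul_mul_tmul, one_mul, dL_tmul, hD.1 a b p,
      TensorProduct.add_tmul, innerMul_tmul_tmul]
  | add u v hu hv =>
    simp only [mul_add, map_add, hu, hv, TensorProduct.tmul_add]
    abel

theorem dL_mul_right (a c : A) (u : A ⊗[K] A) :
    dL K A D a (u * (1 ⊗ₜ c)) = dL K A D a u * (1 ⊗ₜ c) := by
  induction u using TensorProduct.induction_on with
  | zero => simp
  | tmul p q => simp [Algebra.TensorProduct.tmul_mul_tmul]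
  | add u v hu hv => rw [add_mul, map_add, hu, hv, map_add, add_mul]

theorem dR_mul_left (a b : A) (u : A ⊗[K] A) :
    dR K A D a ((b ⊗ₜ 1) * u) = ((b ⊗ₜ 1) ⊗ₜ 1) * dR K A D a u := by
  induction u using TensorProduct.induction_on with
  | zero => simp
  | tmul p q =>
    have hb : (b * p) ⊗ₜ[K] D (a ⊗ₜ q) = (b ⊗ₜ 1) * (p ⊗ₜ D (a ⊗ₜ q)) := by
      rw [Algebra.TensorProduct.tmul_mul_tmul, one_mul]
    rw [Algebra.TensorProduct.tmul_mul_tmul, one_mul, dR_tmul, dR_tmul, hb, assoc_symm_mul,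
      Algebra.TensorProduct.one_def]
    rfl
  | add u v hu hv => rw [mul_add, map_add, hu, hv, map_add, mul_add]

theorem dR_mul_right (hD : LeibnizRules K A D) (a c : A) (u : A ⊗[K] A) :
    dR K A D a (u * (1 ⊗ₜ c)) =
      dR K A D a u * (1 ⊗ₜ c) + innerMul K A (u ⊗ₜ D (a ⊗ₜ c)) := by
  induction u using TensorProduct.induction_on with
  | zero => simp
  | tmul p q =>
    have hc : p ⊗ₜ[K] (D (a ⊗ₜ q) * (1 ⊗ₜ c)) =
        (p ⊗ₜ D (a ⊗ₜ q)) * (1 ⊗ₜ (1 ⊗ₜ c)) := by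
      rw [Algebra.TensorProduct.tmul_mul_tmul, mul_one]
    rw [Algebra.TensorProduct.tmul_mul_tmul, mul_one, dR_tmul, hD.1 a q c, TensorProduct.tmul_add,
      map_add, hc, assoc_symm_mul, innerMul_tmul_tmul_eq_assoc_symm, add_comm]
    rfl
  | add u v hu hv =>
    simp only [add_mul, map_add, hu, hv, TensorProduct.add_tmul]
    abel

theorem isTwistedDerivation_dR_comp_sub_dL_comp (hD : LeibnizRules K A D) (x y : A) :
    IsTwistedDerivation ℓ₃ r₃
      (dR K A D x ∘ₗ D ∘ₗ TensorProduct.mk K A A y -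
        dL K A D y ∘ₗ D ∘ₗ TensorProduct.mk K A A x) := by
  intro b c
  simp only [LinearMap.sub_apply, LinearMap.comp_apply, TensorProduct.mk_apply, hD.1 _ b c,
    map_add, dR_mul_left, dR_mul_right hD, dL_mul_left hD, dL_mul_right, mul_sub, sub_mul,
    AlgHom.comp_apply, Algebra.TensorProduct.includeLeft_apply,
    Algebra.TensorProduct.includeRight_apply]
  abel

variable (D) in
def jacobiDefect (x y : A) (α β : K) : A →ₗ[K] (A ⊗[K] A) ⊗[K] A :=
  (dR K A D x ∘ₗ D ∘ₗ TensorProduct.mk K A A y - dL K A D y ∘ₗ D ∘ₗ TensorProduct.mk K A A x)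
    - dLfstFlip D (flipT K A (D (x ⊗ₜ y)))
    - α • (otimes1 K A y ∘ₗ D ∘ₗ TensorProduct.mk K A A x)
    - β • (otimes1 K A 1 ∘ₗ LinearMap.mulRight K (y ⊗ₜ[K] (1 : A)) ∘ₗ
        D ∘ₗ TensorProduct.mk K A A x)

theorem jacobiDefect_apply (x y : A) (α β : K) (c : A) :
    jacobiDefect D x y α β c =
      (-dL K A D y (D (x ⊗ₜ c)) + dR K A D x (D (y ⊗ₜ c)) -
          dLfst K A D c (flipT K A (D (x ⊗ₜ y)))) -
        (α • otimes1 K A y (D (x ⊗ₜ c)) + β • otimes1 K A 1 (D (x ⊗ₜ c) * (y ⊗ₜ 1))) := by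
  simp only [jacobiDefect, LinearMap.sub_apply, LinearMap.smul_apply, LinearMap.comp_apply,
    TensorProduct.mk_apply, LinearMap.mulRight_apply, dLfstFlip_apply]
  abel

theorem isTwistedDerivation_jacobiDefect (hD : LeibnizRules K A D) (x y : A) (α β : K) :
    IsTwistedDerivation ℓ₃ r₃ (jacobiDefect D x y α β) := by
  have hcomm (c : A) : Commute (r₂ c) (y ⊗ₜ 1) :=
    (Commute.one_left y).tmul (Commute.one_right c)
  intro b c
  have h₁ := isTwistedDerivation_dR_comp_sub_dL_comp hD x y b c
  have h₂ := isTwistedDerivation_dLfstFlip hD (flipT K A (D (x ⊗ₜ y))) b c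
  have h₃ := (hD.isTwistedDerivation_comp_mk x).otimes1_comp y b c
  have h₄ := ((hD.isTwistedDerivation_comp_mk x).mulRight_comp hcomm).otimes1_comp 1 b c
  simp only [jacobiDefect, LinearMap.sub_apply, LinearMap.smul_apply] at h₁ ⊢
  rw [h₁, h₂, h₃, h₄]
  simp only [mul_sub, sub_mul, mul_smul_comm, smul_mul_assoc, smul_add]
  abel

theorem jacobiDefect_apply_eq_zero (hD : LeibnizRules K A D) {x y z : A} {α β : K}
    (hmix : D (y ⊗ₜ x) + flipT K A (D (x ⊗ₜ y)) =
      α • (y ⊗ₜ x - x ⊗ₜ y) + β • (1 ⊗ₜ (y * x) - (x * y) ⊗ₜ 1))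
    (hjac : DJac K A D y x z =
      (-α) • otimes1 K A x (D (y ⊗ₜ z)) +
        β • otimes1 K A 1 ((1 ⊗ₜ x) * D (y ⊗ₜ z))) :
    jacobiDefect D x y α β z = 0 := by
  rw [jacobiDefect_apply, eq_sub_of_add_eq' hmix]
  rw [DJac] at hjac
  simp only [map_sub, map_add, map_smul, dLfst_tmul, hD.apply_one_tmul, hD.2 x y z,
    map_zero] at hjac ⊢
  linear_combination (norm := module) -hjac

theorem IsMixedDoublePoisson.flipped_jacobi_identity {ι : Type*} {v : ι → A} {lam : ι → K}
    (hv : Algebra.adjoin K (Set.range v) = ⊤) (hD : IsMixedDoublePoisson K A v lam D)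
    (i j : ι) (c : A) :
    -(dL K A D (v j) (D (v i ⊗ₜ c))) + dR K A D (v i) (D (v j ⊗ₜ c)) -
        dLfst K A D c (flipT K A (D (v i ⊗ₜ v j))) =
      ((lam j + lam i) / 2) • otimes1 K A (v j) (D (v i ⊗ₜ c)) +
        ((lam j - lam i) / 2) • otimes1 K A 1 (D (v i ⊗ₜ c) * (v j ⊗ₜ 1)) := by
  obtain ⟨⟨hLeib, hmix⟩, hpois⟩ := hD
  have hzero : jacobiDefect D (v i) (v j) ((lam j + lam i) / 2) ((lam j - lam i) / 2) = 0 := by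
    refine (isTwistedDerivation_jacobiDefect hLeib _ _ _ _).eq_zero_of_adjoin_eq_top hv ?_
    rintro _ ⟨k, rfl⟩
    exact jacobiDefect_apply_eq_zero hLeib (hmix j i) (hpois j i k)
  rw [← sub_eq_zero, ← jacobiDefect_apply, hzero, LinearMap.zero_apply]

end DoubleBracket

theorem stmt8_general {K : Type*} [Field K]
    {d : ℕ} (lam : Fin d → K)
    (D : FreeAlgebra K (Fin d) ⊗[K] FreeAlgebra K (Fin d) →ₗ[K] FreeAlgebra K (Fin d) ⊗[K] FreeAlgebra K (Fin d))
    (hD : IsMixedDoublePoisson K (FreeAlgebra K (Fin d)) (FreeAlgebra.ι K) lam D) :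
    ∀ (i j : Fin d) (c : FreeAlgebra K (Fin d)),
      -(dL K (FreeAlgebra K (Fin d)) D (FreeAlgebra.ι K j) (D (FreeAlgebra.ι K i ⊗ₜ[K] c))) +
        dR K (FreeAlgebra K (Fin d)) D (FreeAlgebra.ι K i) (D (FreeAlgebra.ι K j ⊗ₜ[K] c)) -
        dLfst K (FreeAlgebra K (Fin d)) D c
          (flipT K (FreeAlgebra K (Fin d)) (D (FreeAlgebra.ι K i ⊗ₜ[K] FreeAlgebra.ι K j))) =
      ((lam j + lam i) / 2) •
          otimes1 K (FreeAlgebra K (Fin d)) (FreeAlgebra.ι K j) (D (FreeAlgebra.ι K i ⊗ₜ[K] c)) +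
        ((lam j - lam i) / 2) •
          otimes1 K (FreeAlgebra K (Fin d)) (1 : FreeAlgebra K (Fin d))
            (D (FreeAlgebra.ι K i ⊗ₜ[K] c) * (FreeAlgebra.ι K j ⊗ₜ[K] (1 : FreeAlgebra K (Fin d)))) :=
  hD.flipped_jacobi_identity (FreeAlgebra.adjoin_range_ι K (Fin d))

theorem stmt8 {K : Type*} [Field K] [IsAlgClosed K] [CharZero K]
    {d : ℕ} (hd : 1 ≤ d) (lam : Fin d → K)
    (D : FreeAlgebra K (Fin d) ⊗[K] FreeAlgebra K (Fin d) →ₗ[K] FreeAlgebra K (Fin d) ⊗[K] FreeAlgebra K (Fin d))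
    (hD : IsMixedDoublePoisson K (FreeAlgebra K (Fin d)) (FreeAlgebra.ι K) lam D) :
    ∀ (i j : Fin d) (c : FreeAlgebra K (Fin d)),
      -(dL K (FreeAlgebra K (Fin d)) D (FreeAlgebra.ι K j) (D (FreeAlgebra.ι K i ⊗ₜ[K] c))) +
        dR K (FreeAlgebra K (Fin d)) D (FreeAlgebra.ι K i) (D (FreeAlgebra.ι K j ⊗ₜ[K] c)) -
        dLfst K (FreeAlgebra K (Fin d)) D c
          (flipT K (FreeAlgebra K (Fin d)) (D (FreeAlgebra.ι K i ⊗ₜ[K] FreeAlgebra.ι K j))) =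
      ((lam j + lam i) / 2) •
          otimes1 K (FreeAlgebra K (Fin d)) (FreeAlgebra.ι K j) (D (FreeAlgebra.ι K i ⊗ₜ[K] c)) +
        ((lam j - lam i) / 2) •
          otimes1 K (FreeAlgebra K (Fin d)) (1 : FreeAlgebra K (Fin d))
            (D (FreeAlgebra.ι K i ⊗ₜ[K] c) * (FreeAlgebra.ι K j ⊗ₜ[K] (1 : FreeAlgebra K (Fin d)))) :=
  stmt8_general lam D hD
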